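/- Let N be a positive integer, V=[N], A⊆{unordered pairs of V}, and d a nonnegative integer sequence of length N. Let a,v∈V. If N_{av}(d)>0, then P_{av}(d) = d_v · ( ∑_{b∈A*(v)} R_{ba}(d−e_v) · (1−P_{bv}(d−e_b−e_v)) / (1−P_{av}(d−e_a−e_v)) )^{−1}, where all quantities appearing are well defined (in particular N(d−e_c−e_v)>0 for c=a and for every b∈A*(v)). -/

import Mathlib

open scoped Classical

/-- Degree of vertex `i` in the edge set `E`. -/
noncomputable def degC {N : ℕ} (E : Finset (Sym2 (Fin N))) (i : Fin N) : ℕ :=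
  (E.filter (fun e => i ∈ e)).card

/-- `N(d)`: the number of simple graphs on `[N]` with all edges in the allowable set `A`
realising the (integer) degree sequence `d`. -/
noncomputable def Ncnt (N : ℕ) (A : Set (Sym2 (Fin N))) (d : Fin N → ℤ) : ℕ :=
  Nat.card {E : Finset (Sym2 (Fin N)) //
    ↑E ⊆ A ∧ (∀ e ∈ E, ¬ e.IsDiag) ∧ ∀ i, (degC E i : ℤ) = d i}

/-- `N_F(d)`: the number of such graphs whose edge set contains `F`. -/
noncomputable def NcntF (N : ℕ) (A : Set (Sym2 (Fin N))) (F : Finset (Sym2 (Fin N)))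
    (d : Fin N → ℤ) : ℕ :=
  Nat.card {E : Finset (Sym2 (Fin N)) //
    F ⊆ E ∧ ↑E ⊆ A ∧ (∀ e ∈ E, ¬ e.IsDiag) ∧ ∀ i, (degC E i : ℤ) = d i}

/-- `P_{av}(d) = N_{av}(d)/N(d)`. -/
noncomputable def Pedge (N : ℕ) (A : Set (Sym2 (Fin N))) (a v : Fin N) (d : Fin N → ℤ) : ℝ :=
  (NcntF N A {s(a, v)} d : ℝ) / (Ncnt N A d : ℝ)

/-- The elementary unit vector `e_i`. -/
def unitV {N : ℕ} (i : Fin N) : Fin N → ℤ := fun j => if j = i then 1 else 0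

/-- `R_{ab}(d) = N(d - e_a)/N(d - e_b)`. -/
noncomputable def Rrat (N : ℕ) (A : Set (Sym2 (Fin N))) (a b : Fin N) (d : Fin N → ℤ) : ℝ :=
  (Ncnt N A (d - unitV a) : ℝ) / (Ncnt N A (d - unitV b) : ℝ)

/-- `A*(v)`: the set of `b` with `bv ∈ A` and `N_{bv}(d) > 0`. -/
noncomputable def Astar (N : ℕ) (A : Set (Sym2 (Fin N))) (v : Fin N) (d : Fin N → ℤ) :
    Finset (Fin N) :=
  Finset.univ.filter (fun b => s(b, v) ∈ A ∧ 0 < NcntF N A {s(b, v)} d)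

/-! Deleting the edge `bv` from the graphs of degree sequence `d` that contain it gives
`N(d - e_b - e_v) = N_{bv}(d) + N_{bv}(d - e_b - e_v)`, i.e.
`1 - P_{bv}(d - e_b - e_v) = N_{bv}(d) / N(d - e_b - e_v)`, so the `b`-th summand is
`N_{bv}(d) / N_{av}(d)`. Counting pairs (graph, edge at `v`) gives `∑_b N_{bv}(d) = d_v N(d)`,
hence the sum is `d_v N(d) / N_{av}(d) = d_v / P_{av}(d)`. -/

section DegreeSequences

variable {N : ℕ} {A : Set (Sym2 (Fin N))} {d d' : Fin N → ℤ} {E : Finset (Sym2 (Fin N))}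
  {e : Sym2 (Fin N)}

def IsRealisation (A : Set (Sym2 (Fin N))) (d : Fin N → ℤ) (E : Finset (Sym2 (Fin N))) : Prop :=
  ↑E ⊆ A ∧ (∀ e ∈ E, ¬ e.IsDiag) ∧ ∀ i, (degC E i : ℤ) = d i

noncomputable def realisations (A : Set (Sym2 (Fin N))) (d : Fin N → ℤ) :
    Finset (Finset (Sym2 (Fin N))) :=
  Finset.univ.filter (IsRealisation A d)

lemma Ncnt_eq_card_realisations : Ncnt N A d = (realisations A d).card := by
  rw [Ncnt, Nat.card_eq_fintype_card, Fintype.card_subtype, realisations]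
  congr

lemma NcntF_singleton_eq_card : NcntF N A {e} d = ((realisations A d).filter (e ∈ ·)).card := by
  rw [NcntF, Nat.card_eq_fintype_card, Fintype.card_subtype, realisations, Finset.filter_filter]
  simp only [Finset.singleton_subset_iff, IsRealisation, and_comm]

lemma exists_realisation_of_NcntF_pos (h : 0 < NcntF N A {e} d) :
    ∃ E, e ∈ E ∧ IsRealisation A d E := by
  rw [NcntF_singleton_eq_card] at h
  obtain ⟨E, hE⟩ := Finset.card_pos.1 h
  simp only [realisations, Finset.mem_filter, Finset.mem_univ, true_and] at hE
  exact ⟨E, hE.2, hE.1⟩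

lemma mem_of_NcntF_pos (h : 0 < NcntF N A {e} d) : e ∈ A ∧ ¬ e.IsDiag := by
  obtain ⟨E, heE, hEA, hdiag, -⟩ := exists_realisation_of_NcntF_pos h
  exact ⟨hEA heE, hdiag e heE⟩

lemma mem_Astar {b v : Fin N} : b ∈ Astar N A v d ↔ 0 < NcntF N A {s(b, v)} d := by
  rw [Astar, Finset.mem_filter]
  exact ⟨fun h => h.2.2, fun h => ⟨Finset.mem_univ b, (mem_of_NcntF_pos h).1, h⟩⟩

lemma degC_insert (he : e ∉ E) (i : Fin N) :
    (degC (insert e E) i : ℤ) = degC E i + if i ∈ e then 1 else 0 := by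
  unfold degC
  rw [Finset.filter_insert]
  split_ifs with hi
  · rw [Finset.card_insert_of_notMem fun h => he (Finset.mem_filter.1 h).1]
    push_cast
    ring
  · simp

lemma degC_erase (he : e ∈ E) (i : Fin N) :
    (degC (E.erase e) i : ℤ) = degC E i - if i ∈ e then 1 else 0 := by
  have h := degC_insert (Finset.notMem_erase e E) i
  rw [Finset.insert_erase he] at h
  omega

lemma card_realisations_filter_notMem (heA : e ∈ A) (he : ¬ e.IsDiag)
    (hd : ∀ i, d' i + (if i ∈ e then 1 else 0) = d i) :
    ((realisations A d').filter (e ∉ ·)).card = ((realisations A d).filter (e ∈ ·)).card := by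
  refine Finset.card_nbij' (insert e) (Finset.erase · e) ?_ ?_ ?_ ?_
  · intro E hE
    simp only [Finset.mem_coe, realisations, Finset.mem_filter, Finset.mem_univ,
      true_and] at hE ⊢
    obtain ⟨⟨hEA, hdiag, hdeg⟩, heE⟩ := hE
    refine ⟨⟨?_, ?_, fun i => ?_⟩, Finset.mem_insert_self e E⟩
    · rw [Finset.coe_insert]
      exact Set.insert_subset heA hEA
    · simpa [he] using hdiag
    · rw [degC_insert heE, hdeg, hd]
  · intro E hE
    simp only [Finset.mem_coe, realisations, Finset.mem_filter, Finset.mem_univ,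
      true_and] at hE ⊢
    obtain ⟨⟨hEA, hdiag, hdeg⟩, heE⟩ := hE
    refine ⟨⟨?_, fun f hf => hdiag f (Finset.mem_of_mem_erase hf), fun i => ?_⟩,
      Finset.notMem_erase e E⟩
    · exact (Finset.coe_subset.2 (Finset.erase_subset e E)).trans hEA
    · rw [degC_erase heE, hdeg, ← hd]
      ring
  · intro E hE
    exact Finset.erase_insert (Finset.mem_filter.1 hE).2
  · intro E hE
    exact Finset.insert_erase (Finset.mem_filter.1 hE).2

lemma sub_unitV_sub_unitV_add_ite_mem {a v : Fin N} (hav : a ≠ v) (i : Fin N) :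
    (d - unitV a - unitV v) i + (if i ∈ s(a, v) then 1 else 0) = d i := by
  simp only [Pi.sub_apply, unitV, Sym2.mem_iff]
  split_ifs <;> omega

lemma Ncnt_sub_unitV_sub_unitV {a v : Fin N} (hA : s(a, v) ∈ A) (hav : a ≠ v) :
    Ncnt N A (d - unitV a - unitV v) =
      NcntF N A {s(a, v)} d + NcntF N A {s(a, v)} (d - unitV a - unitV v) := by
  rw [Ncnt_eq_card_realisations, NcntF_singleton_eq_card, NcntF_singleton_eq_card,
    ← card_realisations_filter_notMem hA (Sym2.mk_isDiag_iff.not.2 hav)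
      (sub_unitV_sub_unitV_add_ite_mem hav), add_comm]
  exact (Finset.card_filter_add_card_filter_not _).symm

lemma Ncnt_sub_unitV_sub_unitV_pos {a v : Fin N} (h : 0 < NcntF N A {s(a, v)} d) :
    0 < Ncnt N A (d - unitV a - unitV v) := by
  obtain ⟨hA, hdiag⟩ := mem_of_NcntF_pos h
  rw [Ncnt_sub_unitV_sub_unitV hA (Sym2.mk_isDiag_iff.not.1 hdiag)]
  omega

lemma one_sub_Pedge_sub_unitV_sub_unitV {a v : Fin N} (h : 0 < NcntF N A {s(a, v)} d) :
    1 - Pedge N A a v (d - unitV a - unitV v) =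
      NcntF N A {s(a, v)} d / Ncnt N A (d - unitV a - unitV v) := by
  obtain ⟨hA, hdiag⟩ := mem_of_NcntF_pos h
  have hpos : (0 : ℝ) < Ncnt N A (d - unitV a - unitV v) := by
    exact_mod_cast Ncnt_sub_unitV_sub_unitV_pos h
  rw [Pedge, eq_div_iff hpos.ne', sub_mul, div_mul_cancel₀ _ hpos.ne',
    Ncnt_sub_unitV_sub_unitV hA (Sym2.mk_isDiag_iff.not.1 hdiag)]
  push_cast
  ring

lemma card_filter_mk_mem_eq_degC (E : Finset (Sym2 (Fin N))) (v : Fin N) :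
    (Finset.univ.filter fun b => s(b, v) ∈ E).card = degC E v := by
  refine Finset.card_nbij (s(·, v)) ?_ ?_ ?_
  · intro b hb
    simp only [Finset.mem_coe, Finset.mem_filter, Finset.mem_univ, true_and] at hb ⊢
    exact ⟨hb, Sym2.mem_mk_right b v⟩
  · intro b _ b' _ h
    rcases Sym2.eq_iff.1 h with ⟨hbb', -⟩ | ⟨hbv, hvb'⟩
    exacts [hbb', hbv.trans hvb']
  · intro f hf
    simp only [Finset.mem_coe, Finset.mem_filter] at hf
    obtain ⟨hfE, hv⟩ := hf
    have hf : s(Sym2.Mem.other hv, v) = f := by rw [Sym2.eq_swap, Sym2.other_spec hv]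
    exact ⟨Sym2.Mem.other hv, Finset.mem_filter.2 ⟨Finset.mem_univ _, by rwa [hf]⟩, hf⟩

lemma sum_NcntF_eq_mul_Ncnt (v : Fin N) :
    (∑ b, NcntF N A {s(b, v)} d : ℤ) = d v * Ncnt N A d := by
  have hcount : ∑ b, ((realisations A d).filter (s(b, v) ∈ ·)).card =
      ∑ E ∈ realisations A d, degC E v := by
    simpa only [Finset.bipartiteAbove, Finset.bipartiteBelow, card_filter_mk_mem_eq_degC] using
      Finset.sum_card_bipartiteAbove_eq_sum_card_bipartiteBelow
        (fun b (E : Finset (Sym2 (Fin N))) => s(b, v) ∈ E) (s := Finset.univ)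
        (t := realisations A d)
  simp_rw [NcntF_singleton_eq_card]
  rw [← Nat.cast_sum, hcount, Nat.cast_sum, Ncnt_eq_card_realisations, Finset.card_eq_sum_ones,
    Nat.cast_sum, Finset.mul_sum]
  refine Finset.sum_congr rfl fun E hE => ?_
  rw [(Finset.mem_filter.1 hE).2.2.2 v]
  ring

lemma sum_Astar_NcntF_eq_mul_Ncnt (v : Fin N) :
    (∑ b ∈ Astar N A v d, NcntF N A {s(b, v)} d : ℤ) = d v * Ncnt N A d := by
  rw [← sum_NcntF_eq_mul_Ncnt, ← Nat.cast_sum, ← Nat.cast_sum]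
  exact congrArg Nat.cast (Finset.sum_filter_of_ne fun _ _ h =>
    ⟨(mem_of_NcntF_pos (Nat.pos_of_ne_zero h)).1, Nat.pos_of_ne_zero h⟩)

lemma Rrat_mul_one_sub_Pedge_div_one_sub_Pedge {a b v : Fin N}
    (ha : 0 < NcntF N A {s(a, v)} d) (hb : 0 < NcntF N A {s(b, v)} d) :
    Rrat N A b a (d - unitV v) * (1 - Pedge N A b v (d - unitV b - unitV v)) /
        (1 - Pedge N A a v (d - unitV a - unitV v)) =
      NcntF N A {s(b, v)} d / NcntF N A {s(a, v)} d := by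
  have ha' : (0 : ℝ) < Ncnt N A (d - unitV a - unitV v) := by
    exact_mod_cast Ncnt_sub_unitV_sub_unitV_pos ha
  have hb' : (0 : ℝ) < Ncnt N A (d - unitV b - unitV v) := by
    exact_mod_cast Ncnt_sub_unitV_sub_unitV_pos hb
  have ha'' : (0 : ℝ) < NcntF N A {s(a, v)} d := by exact_mod_cast ha
  rw [one_sub_Pedge_sub_unitV_sub_unitV ha, one_sub_Pedge_sub_unitV_sub_unitV hb, Rrat,
    sub_right_comm d (unitV v), sub_right_comm d (unitV v)]
  field_simp

end DegreeSequences

theorem stmt_13_general (N : ℕ) (A : Set (Sym2 (Fin N))) (d : Fin N → ℤ) (a v : Fin N)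
    (hpos : 0 < NcntF N A {s(a, v)} d) :
    0 < Ncnt N A (d - unitV a - unitV v) ∧
    (∀ b ∈ Astar N A v d, 0 < Ncnt N A (d - unitV b - unitV v)) ∧
    Pedge N A a v d =
      (d v : ℝ) * (∑ b ∈ Astar N A v d,
        Rrat N A b a (d - unitV v) *
          (1 - Pedge N A b v (d - unitV b - unitV v)) /
          (1 - Pedge N A a v (d - unitV a - unitV v)))⁻¹ := by
  refine ⟨Ncnt_sub_unitV_sub_unitV_pos hpos,
    fun b hb => Ncnt_sub_unitV_sub_unitV_pos (mem_Astar.1 hb), ?_⟩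
  have hsum : (d v : ℝ) * Ncnt N A d = ∑ b ∈ Astar N A v d, (NcntF N A {s(b, v)} d : ℝ) := by
    exact_mod_cast (sum_Astar_NcntF_eq_mul_Ncnt v).symm
  have hpos' : (0 : ℝ) < NcntF N A {s(a, v)} d := by exact_mod_cast hpos
  have hle : (NcntF N A {s(a, v)} d : ℝ) ≤ d v * Ncnt N A d :=
    hsum ▸ Finset.single_le_sum (f := fun b => (NcntF N A {s(b, v)} d : ℝ))
      (fun b _ => Nat.cast_nonneg _) (mem_Astar.2 hpos)
  have hdv : (d v : ℝ) ≠ 0 := left_ne_zero_of_mul (hpos'.trans_le hle).ne'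
  have hN : (Ncnt N A d : ℝ) ≠ 0 := right_ne_zero_of_mul (hpos'.trans_le hle).ne'
  rw [Finset.sum_congr rfl fun b hb =>
      Rrat_mul_one_sub_Pedge_div_one_sub_Pedge hpos (mem_Astar.1 hb),
    ← Finset.sum_div, ← hsum, Pedge]
  field_simp

/-- Recursive relation for the edge probability `P_{av}(d)` (Proposition 3.1(a)). -/
theorem stmt_13 (N : ℕ) (hN : 0 < N) (A : Set (Sym2 (Fin N))) (d : Fin N → ℤ)
    (hd : ∀ i, 0 ≤ d i) (a v : Fin N)
    (hpos : 0 < NcntF N A {s(a, v)} d) :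
    0 < Ncnt N A (d - unitV a - unitV v) ∧
    (∀ b ∈ Astar N A v d, 0 < Ncnt N A (d - unitV b - unitV v)) ∧
    Pedge N A a v d =
      (d v : ℝ) * (∑ b ∈ Astar N A v d,
        Rrat N A b a (d - unitV v) *
          (1 - Pedge N A b v (d - unitV b - unitV v)) /
          (1 - Pedge N A a v (d - unitV a - unitV v)))⁻¹ :=
  stmt_13_general N A d a v hpos
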